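/- If p ∈ ℝ^d is a maximizer (i.e. all entries of p are positive, p_1 = 1, and min_{w ∈ W_d} G(p,w) ≥ min_{w ∈ W_d} G(q,w) for every q in the positive orthant), then there exists exactly one k ∈ {2,...,d} such that D_k(p) = D_1(p). -/

import Mathlib

def wvec (d : ℕ) (j : Fin d) : Fin d → ℕ :=
  fun i => if i < j then 0 else if i = j then (j : ℕ) + 1 else (i : ℕ)

noncomputable def G (d : ℕ) (p : Fin d → ℝ) (w : Fin d → ℕ) : ℝ :=
  (∏ i, p i) / (Real.sqrt (∑ i, ((w i : ℝ)) ^ 2 * p i ^ 2)) ^ d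

noncomputable def minG (d : ℕ) (p : Fin d → ℝ) : ℝ :=
  ⨅ j : Fin d, G d p (wvec d j)

noncomputable def D (d : ℕ) (j : Fin d) (p : Fin d → ℝ) : ℝ :=
  Real.sqrt (∑ i, ((wvec d j i : ℝ)) ^ 2 * p i ^ 2)

/-- `p*`: `p*_1 = 1`, `p*_2 = 1/√3`, `p*_j = √(2/3)/(j−1)` for `3 ≤ j ≤ d`
(0-based: index `i` has 1-based position `i+1`, so the denominator `j−1` is `i`). -/
noncomputable def pstar (d : ℕ) : Fin d → ℝ :=
  fun i => if (i : ℕ) = 0 then 1 else if (i : ℕ) = 1 then 1 / Real.sqrt 3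
    else Real.sqrt (2 / 3) / ((i : ℕ) : ℝ)

/-!
Indices are 0-based, as in `wvec`. Writing `Dⱼ² = ∑ᵢ wⱼ(i)² pᵢ²`, we have
`minG p = (∏ pᵢ) / (maxⱼ Dⱼ)^d`. Replacing `p_a², p_b²` by `u, v` multiplies `(∏ pᵢ)²` by
`u v / (p_a² p_b²)` and shifts each `Dⱼ²` by `wⱼ(a)² (u - p_a²) + wⱼ(b)² (v - p_b²)`, so at a
maximizer no such transfer raises the product while keeping every `Dⱼ²` below `maxⱼ Dⱼ²`.
Three transfers, each using the previous conclusion, give `D₀ = maxⱼ Dⱼ` (raise `p₀`),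
`D₁ = D₀`, i.e. `p₀² = 3 p₁²` (move mass from `p₀` to `p₁`), and `l² p_l² ≤ p₀²` for `l ≥ 1`
(move mass from `p_l` to `p₀`). For `l ≥ 2` these force `D₁² - D_l² ≥ 4 p₁² - (2l + 1) p_l² > 0`.
-/

open Finset Function Real

lemma Fin.mk_zero_lt_of_ne {d : ℕ} {h : 0 < d} {k : Fin d} (hk : k ≠ ⟨0, h⟩) : ⟨0, h⟩ < k :=
  Fin.lt_def.2 (Nat.pos_of_ne_zero (Fin.val_ne_of_ne hk))

lemma Fin.mk_one_lt_of_ne {d : ℕ} {h₀ : 0 < d} {h₁ : 1 < d} {k : Fin d} (hk₀ : k ≠ ⟨0, h₀⟩)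
    (hk₁ : k ≠ ⟨1, h₁⟩) : ⟨1, h₁⟩ < k := by
  simp only [ne_eq, Fin.ext_iff, Fin.lt_def] at *
  omega

section Weights

variable {d : ℕ} {i j l : Fin d}

lemma wvec_of_lt (h : i < j) : wvec d j i = 0 := by
  simp [wvec, h]

lemma wvec_self (j : Fin d) : wvec d j j = (j : ℕ) + 1 := by
  simp [wvec]

lemma wvec_of_gt (h : j < i) : wvec d j i = i := by
  simp [wvec, h.not_gt, h.ne']

lemma wvec_le_wvec (hjl : j < l) (hi : i ≠ l) : wvec d l i ≤ wvec d j i := by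
  rcases lt_or_gt_of_ne hi with hil | hli
  · simp [wvec_of_lt hil]
  · rw [wvec_of_gt hli, wvec_of_gt (hjl.trans hli)]

end Weights

noncomputable def Dsq (d : ℕ) (j : Fin d) (p : Fin d → ℝ) : ℝ :=
  ∑ i, (wvec d j i : ℝ) ^ 2 * p i ^ 2

def IsMaximizer (d : ℕ) (p : Fin d → ℝ) : Prop :=
  (∀ i, 0 < p i) ∧ ∀ q : Fin d → ℝ, (∀ i, 0 < q i) → minG d q ≤ minG d p

section Dsq

variable {d : ℕ} {p q : Fin d → ℝ}

lemma Dsq_pos (hp : ∀ i, 0 < p i) (j : Fin d) : 0 < Dsq d j p := by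
  have hj := hp j
  calc 0 < (wvec d j j : ℝ) ^ 2 * p j ^ 2 := by rw [wvec_self]; positivity
    _ ≤ Dsq d j p :=
      single_le_sum (f := fun i => (wvec d j i : ℝ) ^ 2 * p i ^ 2)
        (fun i _ => by positivity) (mem_univ j)

lemma D_eq_D_iff (hp : ∀ i, 0 < p i) (j k : Fin d) :
    D d j p = D d k p ↔ Dsq d j p = Dsq d k p :=
  sqrt_inj (Dsq_pos hp j).le (Dsq_pos hp k).le

lemma minG_lt_minG (hp : ∀ i, 0 < p i) (hq : ∀ i, 0 < q i) (hprod : ∏ i, p i < ∏ i, q i)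
    (m : Fin d) (hDsq : ∀ j, Dsq d j q ≤ Dsq d m p) : minG d p < minG d q := by
  have : Nonempty (Fin d) := ⟨m⟩
  obtain ⟨j, hj⟩ := exists_eq_ciInf_of_finite (f := fun j => G d q (wvec d j))
  have hm : 0 < √(Dsq d m p) ^ d := pow_pos (sqrt_pos.2 (Dsq_pos hp m)) d
  calc minG d p ≤ G d p (wvec d m) := ciInf_le (Set.finite_range _).bddBelow m
    _ = (∏ i, p i) / √(Dsq d m p) ^ d := rfl
    _ < (∏ i, q i) / √(Dsq d m p) ^ d := div_lt_div_of_pos_right hprod hm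
    _ ≤ (∏ i, q i) / √(Dsq d j q) ^ d :=
      div_le_div_of_nonneg_left (prod_pos fun i _ => hq i).le
        (pow_pos (sqrt_pos.2 (Dsq_pos hq j)) d)
        (pow_le_pow_left₀ (sqrt_nonneg _) (sqrt_le_sqrt (hDsq j)) d)
    _ = minG d q := hj

lemma Dsq_sub_Dsq_of_eq_off_pair {a b : Fin d} (hab : a ≠ b)
    (hpq : ∀ i, i ≠ a ∧ i ≠ b → q i = p i) (j : Fin d) :
    Dsq d j q - Dsq d j p =
      (wvec d j a : ℝ) ^ 2 * (q a ^ 2 - p a ^ 2) + (wvec d j b : ℝ) ^ 2 * (q b ^ 2 - p b ^ 2) := by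
  rw [Dsq, Dsq, ← sum_sub_distrib, Fintype.sum_eq_add a b hab fun i hi => by simp [hpq i hi]]
  ring

lemma prod_div_prod_of_eq_off_pair (hp : ∀ i, p i ≠ 0) {a b : Fin d} (hab : a ≠ b)
    (hpq : ∀ i, i ≠ a ∧ i ≠ b → q i = p i) :
    (∏ i, q i) / ∏ i, p i = q a / p a * (q b / p b) := by
  rw [← prod_div_distrib, Fintype.prod_eq_mul a b hab fun i hi => by simp [hpq i hi, hp i]]

lemma Dsq_sub_Dsq_ge {j l : Fin d} (hjl : j < l) (p : Fin d → ℝ) :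
    ((j : ℕ) + 1 : ℝ) ^ 2 * p j ^ 2 - (2 * (l : ℕ) + 1) * p l ^ 2 ≤ Dsq d j p - Dsq d l p := by
  set f : Fin d → ℝ := fun i => ((wvec d j i : ℝ) ^ 2 - (wvec d l i : ℝ) ^ 2) * p i ^ 2
  have hf : Dsq d j p - Dsq d l p = ∑ i, f i := by
    simp only [Dsq, f, ← sum_sub_distrib, sub_mul]
  have hpair : ∑ i ∈ {j, l}, f i ≤ ∑ i, f i :=
    sum_le_sum_of_subset_of_nonneg (subset_univ _) fun i _ hi => by
      have hil : i ≠ l := fun h => hi (by simp [h])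
      have hw : (wvec d l i : ℝ) ^ 2 ≤ (wvec d j i : ℝ) ^ 2 := by
        exact_mod_cast Nat.pow_le_pow_left (wvec_le_wvec hjl hil) 2
      exact mul_nonneg (sub_nonneg.2 hw) (sq_nonneg _)
  rw [hf]
  refine le_trans (le_of_eq ?_) hpair
  rw [sum_pair hjl.ne]
  simp only [f, wvec_self, wvec_of_lt hjl, wvec_of_gt hjl]
  push_cast
  ring

lemma Dsq_zero_sub_Dsq_one (hd : 2 ≤ d) (p : Fin d → ℝ) :
    Dsq d ⟨0, Nat.zero_lt_of_lt hd⟩ p - Dsq d ⟨1, hd⟩ p =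
      p ⟨0, Nat.zero_lt_of_lt hd⟩ ^ 2 - 3 * p ⟨1, hd⟩ ^ 2 := by
  set i₀ : Fin d := ⟨0, Nat.zero_lt_of_lt hd⟩
  set i₁ : Fin d := ⟨1, hd⟩
  have h01 : i₀ < i₁ := Fin.mk_lt_mk.2 one_pos
  rw [Dsq, Dsq, ← sum_sub_distrib, Fintype.sum_eq_add i₀ i₁ h01.ne fun i hi => ?_]
  · rw [wvec_self, wvec_self, wvec_of_gt h01, wvec_of_lt h01]
    simp [i₀, i₁]
    ring
  · have h1i : i₁ < i := Fin.mk_one_lt_of_ne hi.1 hi.2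
    rw [wvec_of_gt h1i, wvec_of_gt (h01.trans h1i), sub_self]

end Dsq

namespace IsMaximizer

variable {d : ℕ} {p : Fin d → ℝ}

lemma mul_le_sq (hP : IsMaximizer d p) {a b : Fin d} (hab : a ≠ b) {u v : ℝ} (hu : 0 < u)
    (hv : 0 < v) (m : Fin d)
    (hDsq : ∀ j, Dsq d j p + (wvec d j a : ℝ) ^ 2 * (u - p a ^ 2)
      + (wvec d j b : ℝ) ^ 2 * (v - p b ^ 2) ≤ Dsq d m p) :
    u * v ≤ (p a * p b) ^ 2 := by
  obtain ⟨hp, hmax⟩ := hP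
  by_contra! huv
  set q := update (update p a √u) b √v
  have hqa : q a = √u := by simp [q, hab]
  have hqb : q b = √v := by simp [q]
  have hpq : ∀ i, i ≠ a ∧ i ≠ b → q i = p i := fun i hi => by simp [q, hi.1, hi.2]
  have hq : ∀ i, 0 < q i := by
    intro i
    by_cases hia : i = a
    · rw [hia, hqa]; positivity
    by_cases hib : i = b
    · rw [hib, hqb]; positivity
    rw [hpq i ⟨hia, hib⟩]; exact hp i
  have hprod : ∏ i, p i < ∏ i, q i := by
    have hratio := prod_div_prod_of_eq_off_pair (fun i => (hp i).ne') hab hpq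
    have hpab : 0 < p a * p b := mul_pos (hp a) (hp b)
    have hlt : p a * p b < √u * √v := by
      rw [← sqrt_mul hu.le]
      exact lt_sqrt_of_sq_lt huv
    have hP0 : 0 < ∏ i, p i := prod_pos fun i _ => hp i
    rw [hqa, hqb, div_mul_div_comm, div_eq_div_iff hP0.ne' hpab.ne'] at hratio
    refine lt_of_mul_lt_mul_right ?_ hpab.le
    rw [hratio, mul_comm]
    exact mul_lt_mul_of_pos_right hlt hP0
  refine (hmax q hq).not_gt (minG_lt_minG hp hq hprod m fun j => ?_)
  have := Dsq_sub_Dsq_of_eq_off_pair hab hpq j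
  rw [hqa, hqb, sq_sqrt hu.le, sq_sqrt hv.le] at this
  linarith [hDsq j]

lemma Dsq_le_Dsq_zero (hP : IsMaximizer d p) (hd : 2 ≤ d) (j : Fin d) :
    Dsq d j p ≤ Dsq d ⟨0, Nat.zero_lt_of_lt hd⟩ p := by
  set i₀ : Fin d := ⟨0, Nat.zero_lt_of_lt hd⟩
  have : Nonempty (Fin d) := ⟨i₀⟩
  obtain ⟨m, hm⟩ := Finite.exists_max fun j => Dsq d j p
  refine (hm j).trans (not_lt.1 fun hlt => ?_)
  set i₁ : Fin d := ⟨1, hd⟩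
  have hu : 0 < p i₀ ^ 2 + (Dsq d m p - Dsq d i₀ p) := by have := hP.1 i₀; nlinarith
  have key := hP.mul_le_sq (a := i₀) (b := i₁) (v := p i₁ ^ 2) (Fin.ne_of_val_ne zero_ne_one)
    hu (pow_pos (hP.1 i₁) 2) m fun k => by
      rcases eq_or_ne k i₀ with rfl | hk
      · simp [wvec_self, i₀]
      · rw [wvec_of_lt (Fin.mk_zero_lt_of_ne hk : i₀ < k)]
        simpa using hm k
  nlinarith [mul_pos (sub_pos.2 hlt) (pow_pos (hP.1 i₁) 2)]

lemma Dsq_one_eq_Dsq_zero (hP : IsMaximizer d p) (hd : 2 ≤ d) :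
    Dsq d ⟨1, hd⟩ p = Dsq d ⟨0, Nat.zero_lt_of_lt hd⟩ p := by
  set i₀ : Fin d := ⟨0, Nat.zero_lt_of_lt hd⟩
  set i₁ : Fin d := ⟨1, hd⟩
  have h01 : i₀ < i₁ := Fin.mk_lt_mk.2 one_pos
  refine le_antisymm (hP.Dsq_le_Dsq_zero hd i₁) (not_lt.1 fun hlt => ?_)
  have hdiff := Dsq_zero_sub_Dsq_one hd p
  set θ := (Dsq d i₀ p - Dsq d i₁ p) / 4 with hθ
  have hθpos : 0 < θ := by linarith
  have hp₁ := hP.1 i₁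
  have key := hP.mul_le_sq (u := p i₀ ^ 2 - θ) (v := p i₁ ^ 2 + θ) h01.ne (by nlinarith)
    (by positivity) i₀ fun k => by
      rcases eq_or_ne k i₀ with rfl | hk₀
      · rw [wvec_self, wvec_of_gt h01]
        simp [i₀, i₁]
      rcases eq_or_ne k i₁ with rfl | hk₁
      · rw [wvec_self, wvec_of_lt h01]
        simp [i₁]
        linarith
      · have h1k := Fin.mk_one_lt_of_ne hk₀ hk₁
        rw [wvec_of_lt h1k, wvec_of_lt (h01.trans h1k)]
        simpa using hP.Dsq_le_Dsq_zero hd k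
  nlinarith [mul_pos hθpos hp₁]

lemma sq_mul_sq_le (hP : IsMaximizer d p) (hd : 2 ≤ d) {l : Fin d}
    (hl : l ≠ ⟨0, Nat.zero_lt_of_lt hd⟩) :
    ((l : ℕ) : ℝ) ^ 2 * p l ^ 2 ≤ p ⟨0, Nat.zero_lt_of_lt hd⟩ ^ 2 := by
  set i₀ : Fin d := ⟨0, Nat.zero_lt_of_lt hd⟩
  have h0l : i₀ < l := Fin.mk_zero_lt_of_ne hl
  have hl₀ : (0 : ℝ) < (l : ℕ) := by exact_mod_cast h0l
  by_contra! hlt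
  set ε := ((l : ℕ) ^ 2 * p l ^ 2 - p i₀ ^ 2) / 2 with hε
  have hεpos : 0 < ε := by linarith
  have hp₀ := hP.1 i₀
  have hv : 0 < p l ^ 2 - ε / (l : ℕ) ^ 2 := by
    rw [sub_pos, div_lt_iff₀ (by positivity)]
    nlinarith
  have key := hP.mul_le_sq (u := p i₀ ^ 2 + ε) h0l.ne (by positivity) hv i₀ fun k => by
    rcases eq_or_ne k i₀ with rfl | hk₀
    · rw [wvec_self, wvec_of_gt h0l]
      field_simp
      simp [i₀]
    · rw [wvec_of_lt (Fin.mk_zero_lt_of_ne hk₀ : i₀ < k)]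
      have := hP.Dsq_le_Dsq_zero hd k
      have : 0 ≤ (wvec d k l : ℝ) ^ 2 * (ε / (l : ℕ) ^ 2) := by positivity
      simp
      linarith
  have hgain : (p i₀ ^ 2 + ε) * (p l ^ 2 - ε / (l : ℕ) ^ 2) - (p i₀ * p l) ^ 2
      = ε ^ 2 / (l : ℕ) ^ 2 := by
    field_simp
    rw [hε]
    ring
  have : 0 < ε ^ 2 / (l : ℕ) ^ 2 := by positivity
  linarith

lemma Dsq_ne_Dsq_zero (hP : IsMaximizer d p) (hd : 2 ≤ d) {l : Fin d} (hl : 2 ≤ (l : ℕ)) :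
    Dsq d l p ≠ Dsq d ⟨0, Nat.zero_lt_of_lt hd⟩ p := by
  set i₀ : Fin d := ⟨0, Nat.zero_lt_of_lt hd⟩
  set i₁ : Fin d := ⟨1, hd⟩
  intro hl₀
  have h1l : i₁ < l := Fin.lt_def.2 hl
  have hp₁ : 3 * p i₁ ^ 2 = p i₀ ^ 2 := by
    linarith [Dsq_zero_sub_Dsq_one hd p, hP.Dsq_one_eq_Dsq_zero hd]
  have hlow : 4 * p i₁ ^ 2 ≤ (2 * (l : ℕ) + 1) * p l ^ 2 := by
    have := Dsq_sub_Dsq_ge h1l p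
    norm_num [i₁] at this
    linarith [hP.Dsq_one_eq_Dsq_zero hd]
  have hup : ((l : ℕ) : ℝ) ^ 2 * p l ^ 2 ≤ p i₀ ^ 2 :=
    hP.sq_mul_sq_le hd ((Fin.mk_lt_mk.2 one_pos).trans h1l).ne'
  have hl2 : (2 : ℝ) ≤ (l : ℕ) := by exact_mod_cast hl
  have hp₀ := hP.1 i₀
  nlinarith [mul_le_mul_of_nonneg_left hlow (sq_nonneg ((l : ℕ) : ℝ)),
    mul_le_mul_of_nonneg_left hup (by positivity : (0 : ℝ) ≤ 2 * (l : ℕ) + 1),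
    mul_nonneg (mul_nonneg (sub_nonneg.2 hl2) (by positivity : (0 : ℝ) ≤ 4 * (l : ℕ) + 2))
      (sq_nonneg (p i₀)), pow_pos hp₀ 2]

end IsMaximizer

/-- If `p` is a maximizer, then there is exactly one `k ∈ {2,…,d}` (0-based:
`1 ≤ k`) with `D_k(p) = D_1(p)`. -/
theorem stmt9 (d : ℕ) (hd : 2 ≤ d) (p : Fin d → ℝ)
    (hp : ∀ i, 0 < p i)
    (hmax : ∀ q : Fin d → ℝ, (∀ i, 0 < q i) → minG d q ≤ minG d p) :
    ∃! k : Fin d, 1 ≤ (k : ℕ) ∧ D d k p = D d ⟨0, by omega⟩ p := by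
  have hP : IsMaximizer d p := ⟨hp, hmax⟩
  refine ⟨⟨1, hd⟩, ⟨le_rfl, (D_eq_D_iff hp _ _).2 (hP.Dsq_one_eq_Dsq_zero hd)⟩, ?_⟩
  rintro k ⟨hk, hkD⟩
  by_contra hk₁
  have hk₂ : 2 ≤ (k : ℕ) := by
    have : (k : ℕ) ≠ 1 := fun h => hk₁ (Fin.ext h)
    omega
  exact hP.Dsq_ne_Dsq_zero hd hk₂ ((D_eq_D_iff hp _ _).1 hkD)
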